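/- arXiv:1506.03923 — 2 statements merged into one kernel-verified Lean document; each statement's English description precedes it below -/
import Mathlib

section
/- If λ is a nonzero eigenvalue of the matrix G_s (the unidirectional ring coupling matrix with shortcut of weight s from node ℓ to node N), then the vector b = (1, λ, λ², …, λ^{N−1})ᵀ satisfies G_s b = λ b; i.e., b is an eigenvector of G_s for the eigenvalue λ. -/
/-- The coupling matrix of a unidirectional ring of `N` nodes with an
additional shortcut of weight `s` from node `ℓ` to node `N`. -/
def ringShortcutMatrix (N ℓ : ℕ) (s : ℂ) : Matrix (Fin N) (Fin N) ℂ :=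
  fun i j =>
    (if (i : ℕ) + 1 = (j : ℕ) then 1 else 0) +
    (if (i : ℕ) = N - 1 ∧ (j : ℕ) = 0 then 1 else 0) +
    (if (i : ℕ) = N - 1 ∧ (j : ℕ) = ℓ - 1 then s else 0)

theorem stmt_4 (N ℓ : ℕ) (hN : 3 ≤ N) (hℓ : 2 ≤ ℓ) (hℓN : ℓ ≤ N - 1)
    (s lam : ℂ) (hlam : lam ≠ 0)
    (hroot : lam ^ N - s * lam ^ (ℓ - 1) - 1 = 0) :
    (ringShortcutMatrix N ℓ s).mulVec (fun j => lam ^ (j : ℕ))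
      = lam • (fun j : Fin N => lam ^ (j : ℕ)) := by
  funext i
  have hN0 : 0 < N := by omega
  simp only [Matrix.mulVec, dotProduct, ringShortcutMatrix, Pi.smul_apply, smul_eq_mul,
    add_mul, ite_mul, one_mul, zero_mul, Finset.sum_add_distrib]
  by_cases hi : (i : ℕ) = N - 1
  · have h1 : (∑ j : Fin N, if (i : ℕ) + 1 = (j : ℕ) then lam ^ (j : ℕ) else 0) = 0 := by
      apply Finset.sum_eq_zero
      intro j _
      have := j.isLt
      rw [if_neg]; omega
    have h2 : (∑ j : Fin N, if (i : ℕ) = N - 1 ∧ (j : ℕ) = 0 then lam ^ (j : ℕ) else 0) = 1 := by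
      rw [Finset.sum_eq_single (⟨0, hN0⟩ : Fin N)]
      · simp [hi]
      · intro j _ hj
        rw [if_neg]
        rintro ⟨-, hj0⟩
        exact hj (Fin.ext hj0)
      · simp
    have h3 : (∑ j : Fin N, if (i : ℕ) = N - 1 ∧ (j : ℕ) = ℓ - 1 then s * lam ^ (j : ℕ) else 0)
        = s * lam ^ (ℓ - 1) := by
      rw [Finset.sum_eq_single (⟨ℓ - 1, by omega⟩ : Fin N)]
      · simp [hi]
      · intro j _ hj
        rw [if_neg]
        rintro ⟨-, hj0⟩
        exact hj (Fin.ext hj0)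
      · simp
    rw [h1, h2, h3, hi]
    have hpow : lam * lam ^ (N - 1) = lam ^ N := by
      rw [← pow_succ']; congr 1; omega
    rw [hpow]
    linear_combination -hroot
  · have hlt : (i : ℕ) + 1 < N := by have := i.isLt; omega
    have h1 : (∑ j : Fin N, if (i : ℕ) + 1 = (j : ℕ) then lam ^ (j : ℕ) else 0)
        = lam ^ ((i : ℕ) + 1) := by
      rw [Finset.sum_eq_single (⟨(i : ℕ) + 1, hlt⟩ : Fin N)]
      · simp
      · intro j _ hj
        rw [if_neg]
        intro hj0
        exact hj (Fin.ext hj0.symm)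
      · simp
    have h2 : (∑ j : Fin N, if (i : ℕ) = N - 1 ∧ (j : ℕ) = 0 then lam ^ (j : ℕ) else 0) = 0 :=
      Finset.sum_eq_zero fun j _ => by rw [if_neg]; tauto
    have h3 : (∑ j : Fin N, if (i : ℕ) = N - 1 ∧ (j : ℕ) = ℓ - 1 then s * lam ^ (j : ℕ) else 0)
        = 0 := Finset.sum_eq_zero fun j _ => by rw [if_neg]; tauto
    rw [h1, h2, h3, pow_succ']
    ring
end

section
/- The zero equilibrium of the linear system dZ/dt = [Id_N ⊗ M_μ + G_s ⊗ Id_2] Z is asymptotically stable if and only if Re(λ) < −α for every eigenvalue λ of G_s, where μ = α + iβ. Equivalently: all eigenvalues of Id_N ⊗ M_μ + G_s ⊗ Id_2 have negative real part iff max_{λ ∈ σ(G_s)} Re(λ) < −α. -/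
open Kronecker

open Matrix Complex in
private noncomputable def Pm : Matrix (Fin 2) (Fin 2) ℂ := !![1, 1; -I, I]
open Matrix Complex in
private noncomputable def Pim : Matrix (Fin 2) (Fin 2) ℂ := !![1/2, I/2; 1/2, -I/2]
open Matrix Complex in
private noncomputable def Dm (α β : ℝ) : Matrix (Fin 2) (Fin 2) ℂ :=
  !![(α:ℂ) + β * I, 0; 0, (α:ℂ) - β * I]

open Matrix Complex in
private lemma hPiP : Pim * Pm = 1 := by
  ext i j
  fin_cases i <;> fin_cases j <;>
    simp [Pm, Pim, Matrix.mul_apply, Fin.sum_univ_two] <;> ring_nf <;>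
    simp [Complex.I_sq] <;> norm_num

open Matrix Complex in
private lemma hconj (α β : ℝ) :
    Pim * ((!![α, -β; β, α]).map Complex.ofReal) * Pm = Dm α β := by
  ext i j
  fin_cases i <;> fin_cases j <;>
    simp [Pm, Pim, Dm, Matrix.mul_apply, Fin.sum_univ_two, Matrix.map_apply,
      Matrix.vecMul, dotProduct] <;> ring_nf <;>
    simp [Complex.I_sq] <;> ring

private lemma mem_spec_iff {n : Type*} [Fintype n] [DecidableEq n]
    (M : Matrix n n ℂ) (z : ℂ) :
    z ∈ spectrum ℂ M ↔ (z • (1 : Matrix n n ℂ) - M).det = 0 := by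
  rw [spectrum.mem_iff, Matrix.isUnit_iff_isUnit_det, isUnit_iff_ne_zero, not_not,
    Algebra.algebraMap_eq_smul_one]

open Matrix Complex in
private lemma map_eq (N : ℕ) (α β : ℝ) (G : Matrix (Fin N) (Fin N) ℝ) :
    (((1 : Matrix (Fin N) (Fin N) ℝ) ⊗ₖ !![α, -β; β, α]
        + G ⊗ₖ (1 : Matrix (Fin 2) (Fin 2) ℝ)).map Complex.ofReal)
    = (1 : Matrix (Fin N) (Fin N) ℂ) ⊗ₖ ((!![α, -β; β, α]).map Complex.ofReal)
        + (G.map Complex.ofReal) ⊗ₖ (1 : Matrix (Fin 2) (Fin 2) ℂ) := by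
  ext ⟨i, a⟩ ⟨j, b⟩
  simp [Matrix.map_apply, Matrix.kroneckerMap_apply, Matrix.one_apply]
  split_ifs <;> push_cast <;> ring

open Matrix Complex in
private lemma det_key (N : ℕ) (α β : ℝ) (G : Matrix (Fin N) (Fin N) ℝ) (z : ℂ) :
    (z • (1 : Matrix (Fin N × Fin 2) (Fin N × Fin 2) ℂ)
      - ((1 : Matrix (Fin N) (Fin N) ℂ) ⊗ₖ ((!![α, -β; β, α]).map Complex.ofReal)
        + (G.map Complex.ofReal) ⊗ₖ (1 : Matrix (Fin 2) (Fin 2) ℂ))).det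
    = ((z - ((α:ℂ) + β * I)) • (1 : Matrix (Fin N) (Fin N) ℂ) - G.map Complex.ofReal).det
      * ((z - ((α:ℂ) - β * I)) • (1 : Matrix (Fin N) (Fin N) ℂ) - G.map Complex.ofReal).det := by
  set Gc := G.map Complex.ofReal
  set Mc := (!![α, -β; β, α]).map Complex.ofReal with hMc
  set Q : Matrix (Fin N × Fin 2) (Fin N × Fin 2) ℂ := (1 : Matrix (Fin N) (Fin N) ℂ) ⊗ₖ Pm with hQ
  set Qi : Matrix (Fin N × Fin 2) (Fin N × Fin 2) ℂ := (1 : Matrix (Fin N) (Fin N) ℂ) ⊗ₖ Pim with hQi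
  have hQiQ : Qi * Q = 1 := by
    rw [hQ, hQi, ← Matrix.mul_kronecker_mul, one_mul, hPiP, Matrix.one_kronecker_one]
  have hdet : ∀ X : Matrix (Fin N × Fin 2) (Fin N × Fin 2) ℂ, (Qi * X * Q).det = X.det := by
    intro X
    calc (Qi * X * Q).det = Qi.det * X.det * Q.det := by rw [Matrix.det_mul, Matrix.det_mul]
      _ = X.det * (Qi * Q).det := by rw [Matrix.det_mul]; ring
      _ = X.det := by rw [hQiQ, Matrix.det_one, mul_one]
  rw [← hdet (z • 1 - _)]
  have e0 : Qi * (z • (1 : Matrix (Fin N × Fin 2) (Fin N × Fin 2) ℂ)) * Q = z • 1 := by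
    rw [Matrix.mul_smul, Matrix.smul_mul, mul_one, hQiQ]
  have e1 : Qi * ((1 : Matrix (Fin N) (Fin N) ℂ) ⊗ₖ Mc) * Q
      = (1 : Matrix (Fin N) (Fin N) ℂ) ⊗ₖ Dm α β := by
    rw [hQ, hQi, ← Matrix.mul_kronecker_mul, ← Matrix.mul_kronecker_mul, one_mul, one_mul,
      hMc, hconj]
  have e2 : Qi * (Gc ⊗ₖ (1 : Matrix (Fin 2) (Fin 2) ℂ)) * Q
      = Gc ⊗ₖ (1 : Matrix (Fin 2) (Fin 2) ℂ) := by
    rw [hQ, hQi, ← Matrix.mul_kronecker_mul, ← Matrix.mul_kronecker_mul, one_mul, mul_one,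
      mul_one, hPiP]
  have hc : Qi * (z • (1 : Matrix (Fin N × Fin 2) (Fin N × Fin 2) ℂ)
      - ((1 : Matrix (Fin N) (Fin N) ℂ) ⊗ₖ Mc + Gc ⊗ₖ 1)) * Q
      = Matrix.blockDiagonal
          (fun a : Fin 2 => (z - Dm α β a a) • (1 : Matrix (Fin N) (Fin N) ℂ) - Gc) := by
    have expand : Qi * (z • (1 : Matrix (Fin N × Fin 2) (Fin N × Fin 2) ℂ)
        - ((1 : Matrix (Fin N) (Fin N) ℂ) ⊗ₖ Mc + Gc ⊗ₖ 1)) * Q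
        = Qi * (z • 1) * Q
          - (Qi * ((1 : Matrix (Fin N) (Fin N) ℂ) ⊗ₖ Mc) * Q
            + Qi * (Gc ⊗ₖ (1 : Matrix (Fin 2) (Fin 2) ℂ)) * Q) := by
      rw [Matrix.mul_sub, Matrix.sub_mul, Matrix.mul_add, Matrix.add_mul]
    rw [expand, e0, e1, e2]
    ext ⟨i, a⟩ ⟨j, b⟩
    fin_cases a <;> fin_cases b <;>
      simp [Matrix.blockDiagonal_apply, Dm, Matrix.kroneckerMap_apply,
        Matrix.one_apply, Prod.ext_iff, Matrix.sub_apply, Matrix.add_apply,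
        Matrix.smul_apply, smul_eq_mul] <;> split_ifs <;> ring
  rw [hc, Matrix.det_blockDiagonal, Fin.prod_univ_two]
  simp [Dm]

theorem stmt_7 (N : ℕ) (hN : 1 ≤ N) (α β : ℝ)
    (G : Matrix (Fin N) (Fin N) ℝ) :
    (∀ z ∈ spectrum ℂ
        (((1 : Matrix (Fin N) (Fin N) ℝ) ⊗ₖ !![α, -β; β, α]
            + G ⊗ₖ (1 : Matrix (Fin 2) (Fin 2) ℝ)).map (Complex.ofReal)),
      z.re < 0)
    ↔ (∀ lam ∈ spectrum ℂ (G.map Complex.ofReal), lam.re < -α) := by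
  have key : ∀ z : ℂ, z ∈ spectrum ℂ
      (((1 : Matrix (Fin N) (Fin N) ℝ) ⊗ₖ !![α, -β; β, α]
          + G ⊗ₖ (1 : Matrix (Fin 2) (Fin 2) ℝ)).map (Complex.ofReal))
      ↔ ((z - ((α:ℂ) + β * Complex.I)) • (1 : Matrix (Fin N) (Fin N) ℂ)
            - G.map Complex.ofReal).det
          * ((z - ((α:ℂ) - β * Complex.I)) • (1 : Matrix (Fin N) (Fin N) ℂ)
            - G.map Complex.ofReal).det = 0 := by
    intro z
    rw [mem_spec_iff, map_eq, det_key]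
  constructor
  · intro h lam hlam
    have hmem : lam + ((α:ℂ) + β * Complex.I) ∈ spectrum ℂ
        (((1 : Matrix (Fin N) (Fin N) ℝ) ⊗ₖ !![α, -β; β, α]
            + G ⊗ₖ (1 : Matrix (Fin 2) (Fin 2) ℝ)).map (Complex.ofReal)) := by
      rw [key]
      rw [mem_spec_iff] at hlam
      rw [add_sub_cancel_right, hlam, zero_mul]
    have := h _ hmem
    simp [Complex.add_re, Complex.mul_re] at this
    linarith
  · intro h z hz
    rw [key] at hz
    rcases mul_eq_zero.mp hz with h0 | h0
    · have := h (z - ((α:ℂ) + β * Complex.I)) ((mem_spec_iff _ _).mpr h0)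
      simp [Complex.sub_re, Complex.mul_re] at this
      linarith
    · have := h (z - ((α:ℂ) - β * Complex.I)) ((mem_spec_iff _ _).mpr h0)
      simp [Complex.sub_re, Complex.mul_re] at this
      linarith
end
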